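/- For every integer m ≥ 1 and every real t ≥ 0, the series Σ_{n≥0} φ³_{n,m} t^n converges if and only if t ≤ 27/256. -/

import Mathlib

/-!
The ratio `φ³_{n+1,m} / φ³_{n,m}` is a rational function of `n` tending to `256/27`, so the
ratio test gives divergence for `t > 27/256`. At `t = 27/256` the terms `a n` satisfy the
Raabe-type estimate `a (n+1) (n+3) ≤ a n (n+1)` once `n ≥ m²`; hence `a n (n+1) (n+2)` is
eventually non-increasing, `a n = O(1/n²)`, and the series converges. Smaller `t` follow by
comparison.
-/

open Filter Topology

/-- The number of rooted type III triangulations of a disc with m+2 boundary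
vertices and n internal vertices (for m ≥ 1). -/
noncomputable def phi3 (n m : ℕ) : ℝ :=
  (2 * Nat.factorial (2 * m + 1) * Nat.factorial (4 * n + 2 * m - 1) : ℝ) /
    (Nat.factorial (m - 1) * Nat.factorial (m + 1) * Nat.factorial n *
      Nat.factorial (3 * n + 2 * m + 1))

theorem summable_of_eventually_mul_add_three_le {f : ℕ → ℝ} (hf : ∀ n, 0 ≤ f n)
    (h : ∀ᶠ n : ℕ in atTop, f (n + 1) * (n + 3) ≤ f n * (n + 1)) : Summable f := by
  obtain ⟨N, hN⟩ := eventually_atTop.1 h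
  set g : ℕ → ℝ := fun n => f n * ((n + 1) * (n + 2)) with hg
  have hg_anti : AntitoneOn g (Set.Ici N) := antitoneOn_nat_Ici_of_succ_le fun n hn => by
    have := mul_le_mul_of_nonneg_right (hN n hn) (by positivity : (0 : ℝ) ≤ n + 2)
    simp only [hg]
    push_cast
    linarith
  refine .of_norm_bounded_eventually_nat
    ((Real.summable_one_div_nat_pow.2 one_lt_two).mul_left (g N)) ?_
  filter_upwards [eventually_ge_atTop N, eventually_ge_atTop 1] with n hnN hn1
  have hn : (0 : ℝ) < n ^ 2 := by positivity
  rw [Real.norm_of_nonneg (hf n), mul_one_div, le_div_iff₀ hn]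
  calc f n * n ^ 2 ≤ g n := by
        simp only [hg]
        gcongr
        · exact hf n
        · nlinarith
    _ ≤ g N := hg_anti Set.self_mem_Ici hnN hnN

theorem phi3_pos (n m : ℕ) : 0 < phi3 n m := by
  unfold phi3
  positivity

theorem phi3_succ_mul (n : ℕ) {m : ℕ} (hm : 1 ≤ m) :
    phi3 (n + 1) m *
      ((n + 1) * (3 * n + 2 * m + 2) * (3 * n + 2 * m + 3) * (3 * n + 2 * m + 4)) =
    phi3 n m *
      ((4 * n + 2 * m) * (4 * n + 2 * m + 1) * (4 * n + 2 * m + 2) * (4 * n + 2 * m + 3)) := by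
  -- Naming the arguments of the factorials keeps `Nat.factorial_succ` from unfolding them further.
  obtain ⟨a, ha⟩ : ∃ a, 4 * n + 2 * m - 1 = a := ⟨_, rfl⟩
  obtain ⟨b, hb⟩ : ∃ b, 3 * n + 2 * m + 1 = b := ⟨_, rfl⟩
  have e1 : 4 * (n + 1) + 2 * m - 1 = a + 1 + 1 + 1 + 1 := by omega
  have e2 : 3 * (n + 1) + 2 * m + 1 = b + 1 + 1 + 1 := by omega
  have hA : (4 * n + 2 * m : ℝ) = a + 1 := by rw [← ha]; norm_cast; omega
  have hB : (3 * n + 2 * m : ℝ) = b - 1 := by rw [← hb]; push_cast; ring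
  simp only [phi3, e1, e2, ha, hb, Nat.factorial_succ, hA, hB]
  push_cast
  field_simp
  ring

theorem phi3_succ_div (n : ℕ) {m : ℕ} (hm : 1 ≤ m) :
    phi3 (n + 1) m / phi3 n m =
      (4 * n + 2 * m) / (n + 1) * ((4 * n + 2 * m + 1) / (3 * n + 2 * m + 2)) *
        ((4 * n + 2 * m + 2) / (3 * n + 2 * m + 3)) *
          ((4 * n + 2 * m + 3) / (3 * n + 2 * m + 4)) := by
  rw [div_eq_iff (phi3_pos n m).ne']
  field_simp
  linear_combination phi3_succ_mul n hm

theorem tendsto_phi3_succ_div {m : ℕ} (hm : 1 ≤ m) :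
    Tendsto (fun n => phi3 (n + 1) m / phi3 n m) atTop (𝓝 (256 / 27)) := by
  have h := (((tendsto_add_mul_div_add_mul_atTop_nhds (2 * m : ℝ) 1 4 one_ne_zero).mul
    (tendsto_add_mul_div_add_mul_atTop_nhds (2 * m + 1 : ℝ) (2 * m + 2) 4 three_ne_zero)).mul
    (tendsto_add_mul_div_add_mul_atTop_nhds (2 * m + 2 : ℝ) (2 * m + 3) 4 three_ne_zero)).mul
    (tendsto_add_mul_div_add_mul_atTop_nhds (2 * m + 3 : ℝ) (2 * m + 4) 4 three_ne_zero)
  rw [show (256 / 27 : ℝ) = 4 / 1 * (4 / 3) * (4 / 3) * (4 / 3) by norm_num]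
  refine h.congr fun n => ?_
  rw [phi3_succ_div n hm]
  ring

theorem phi3_ratio_poly_le {m n : ℕ} (hm : 1 ≤ m) (hn : m ^ 2 ≤ n) :
    27 * ((4 * n + 2 * m) * (4 * n + 2 * m + 1) * (4 * n + 2 * m + 2) * (4 * n + 2 * m + 3))
        * (n + 3) ≤
      256 * ((n + 1) * (3 * n + 2 * m + 2) * (3 * n + 2 * m + 3) * (3 * n + 2 * m + 4))
        * (n + 1) := by
  obtain ⟨j, rfl⟩ := Nat.exists_eq_add_of_le hm
  obtain ⟨k, rfl⟩ := Nat.exists_eq_add_of_le hn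
  -- In the variables `j = m - 1` and `k = n - m²` the gap is this polynomial with
  -- nonnegative coefficients.
  refine le_trans (Nat.le_add_right _
    (189504 + 651568*j + 1017704*j^2 + 923308*j^3 + 535028*j^4 + 211616*j^5 + 63392*j^6
      + 15296*j^7 + 2304*j^8 + 308400*k + 737620*k*j + 793468*k*j^2 + 480208*k*j^3
      + 190112*k*j^4 + 54208*k*j^5 + 10368*k*j^6 + 179880*k^2 + 252880*k^2*j
      + 170160*k^2*j^2 + 62528*k^2*j^3 + 17280*k^2*j^4 + 43440*k^3 + 23616*k^3*j
      + 12672*k^3*j^2 + 3456*k^4)) (le_of_eq ?_)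
  ring

theorem phi3_succ_mul_le {m n : ℕ} (hm : 1 ≤ m) (hn : m ^ 2 ≤ n) :
    27 * phi3 (n + 1) m * (n + 3) ≤ 256 * phi3 n m * (n + 1) := by
  have hD : (0 : ℝ) <
      (n + 1) * (3 * n + 2 * m + 2) * (3 * n + 2 * m + 3) * (3 * n + 2 * m + 4) := by
    positivity
  have hpoly : (27 * ((4 * n + 2 * m) * (4 * n + 2 * m + 1) * (4 * n + 2 * m + 2)
      * (4 * n + 2 * m + 3)) * (n + 3) : ℝ) ≤
      256 * ((n + 1) * (3 * n + 2 * m + 2) * (3 * n + 2 * m + 3) * (3 * n + 2 * m + 4))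
        * (n + 1) := by
    exact_mod_cast phi3_ratio_poly_le hm hn
  rw [← mul_le_mul_iff_of_pos_right hD]
  linear_combination mul_le_mul_of_nonneg_left hpoly (phi3_pos n m).le +
    27 * (n + 3) * phi3_succ_mul n hm

theorem summable_phi3_mul_pow_critical {m : ℕ} (hm : 1 ≤ m) :
    Summable fun n => phi3 n m * (27 / 256) ^ n := by
  refine summable_of_eventually_mul_add_three_le (fun n => by have := phi3_pos n m; positivity) ?_
  filter_upwards [eventually_ge_atTop (m ^ 2)] with n hn
  rw [pow_succ]
  linear_combination (27 / 256 : ℝ) ^ n / 256 * phi3_succ_mul_le hm hn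

theorem not_summable_phi3_mul_pow {m : ℕ} (hm : 1 ≤ m) {t : ℝ} (ht : 27 / 256 < t) :
    ¬Summable fun n => phi3 n m * t ^ n := by
  have ht0 : 0 < t := by linarith
  refine not_summable_of_ratio_test_tendsto_gt_one (l := 256 / 27 * t) (by linarith) ?_
  refine ((tendsto_phi3_succ_div hm).mul_const t).congr fun n => ?_
  have := phi3_pos n m
  have := phi3_pos (n + 1) m
  rw [Real.norm_of_nonneg (by positivity), Real.norm_of_nonneg (by positivity), pow_succ]
  field_simp

/-- for m ≥ 1 and t ≥ 0, the series Σ_n φ³_{n,m} t^n converges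
iff t ≤ 27/256. -/
theorem Z3_radius (m : ℕ) (hm : 1 ≤ m) (t : ℝ) (ht : 0 ≤ t) :
    Summable (fun n : ℕ => phi3 n m * t ^ n) ↔ t ≤ 27 / 256 := by
  refine ⟨fun hs => ?_, fun hle => ?_⟩
  · by_contra! h
    exact not_summable_phi3_mul_pow hm h hs
  · refine (summable_phi3_mul_pow_critical hm).of_nonneg_of_le (fun n => ?_) fun n => ?_
    · have := phi3_pos n m
      positivity
    · exact mul_le_mul_of_nonneg_left (pow_le_pow_left₀ ht hle n) (phi3_pos n m).le
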